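/- arXiv:1603.01173 — 3 statements merged into one kernel-verified Lean document; each statement's English description precedes it below -/
import Mathlib

section
/- For bounded self-adjoint operators A and B on a Hilbert space, the Hausdorff distance between the spectrum of A and the spectrum of B is at most the operator norm of A - B. -/
/-!
If a point `z` of `σ(a)` were farther than `‖a - b‖` from `σ(b)`, then `z - b` would be
invertible with `‖(z - b)⁻¹‖ ≤ 1 / dist(z, σ(b))`, by the continuous functional calculus of the
normal element `b`; the factorization `z - a = (z - b) (1 + (z - b)⁻¹ (b - a))` with a Neumann
series for the second factor would then make `z - a` invertible as well.
-/

open Metric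

theorem spectrum.notMem_of_norm_inverse_mul_norm_sub_lt_one {𝕜 A : Type*} [NormedField 𝕜]
    [NormedRing A] [CompleteSpace A] [Algebra 𝕜 A] {a b : A} {z : 𝕜}
    (hb : IsUnit (algebraMap 𝕜 A z - b))
    (h : ‖Ring.inverse (algebraMap 𝕜 A z - b)‖ * ‖a - b‖ < 1) :
    z ∉ spectrum 𝕜 a := by
  obtain ⟨u, hu⟩ := hb
  rw [← hu, Ring.inverse_unit] at h
  have hsmall : ‖(↑u⁻¹ : A) * (b - a)‖ < 1 :=
    (norm_mul_le _ _).trans_lt (by rwa [norm_sub_rev])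
  have hfactor : algebraMap 𝕜 A z - a = u * (1 + ↑u⁻¹ * (b - a)) := by
    rw [mul_add, mul_one, ← mul_assoc, u.mul_inv, one_mul, hu]
    abel
  have hunit : IsUnit (1 + ↑u⁻¹ * (b - a)) := by
    have := (Units.oneSub (-(↑u⁻¹ * (b - a))) (by rwa [norm_neg])).isUnit
    rwa [Units.val_oneSub, sub_neg_eq_add] at this
  rw [spectrum.mem_iff, not_not, hfactor]
  exact u.isUnit.mul hunit

theorem IsStarNormal.norm_inverse_algebraMap_sub_le {A : Type*} [CStarAlgebra A] {b : A}
    [IsStarNormal b] {z : ℂ} (hz : 0 < infDist z (spectrum ℂ b)) :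
    ‖Ring.inverse (algebraMap ℂ A z - b)‖ ≤ (infDist z (spectrum ℂ b))⁻¹ := by
  have hz_le : ∀ t ∈ spectrum ℂ b, infDist z (spectrum ℂ b) ≤ ‖z - t‖ := fun t ht ↦
    (dist_eq_norm z t).symm ▸ infDist_le_dist_of_mem ht
  have hne : ∀ t ∈ spectrum ℂ b, z - t ≠ 0 := fun t ht h0 ↦
    hz.not_ge (by simpa [h0] using hz_le t ht)
  have hcfc : cfc (fun t ↦ z - t) b = algebraMap ℂ A z - b := by
    rw [cfc_sub (fun _ ↦ z) (fun t ↦ t) b, cfc_const z b, cfc_id' ℂ b]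
  rw [← hcfc, ← cfc_inv (fun t ↦ z - t) b hne]
  refine norm_cfc_le (inv_nonneg.mpr hz.le) fun t ht ↦ ?_
  rw [norm_inv]
  exact inv_anti₀ hz (hz_le t ht)

theorem infDist_spectrum_le_norm_sub {A : Type*} [CStarAlgebra A] {a b : A} [IsStarNormal b]
    {z : ℂ} (hz : z ∈ spectrum ℂ a) : infDist z (spectrum ℂ b) ≤ ‖a - b‖ := by
  by_contra! hlt
  have hd : 0 < infDist z (spectrum ℂ b) := (norm_nonneg _).trans_lt hlt
  have hb : IsUnit (algebraMap ℂ A z - b) :=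
    spectrum.notMem_iff.mp fun hzb ↦ hd.ne' (infDist_zero_of_mem hzb)
  refine spectrum.notMem_of_norm_inverse_mul_norm_sub_lt_one hb ?_ hz
  calc ‖Ring.inverse (algebraMap ℂ A z - b)‖ * ‖a - b‖
      ≤ (infDist z (spectrum ℂ b))⁻¹ * ‖a - b‖ := by
        gcongr
        exact IsStarNormal.norm_inverse_algebraMap_sub_le hd
    _ < (infDist z (spectrum ℂ b))⁻¹ * infDist z (spectrum ℂ b) := by gcongr
    _ = 1 := inv_mul_cancel₀ hd.ne'

theorem hausdorffDist_spectrum_le_norm_sub {A : Type*} [CStarAlgebra A] (a b : A)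
    [IsStarNormal a] [IsStarNormal b] :
    hausdorffDist (spectrum ℂ a) (spectrum ℂ b) ≤ ‖a - b‖ :=
  hausdorffDist_le_of_infDist (norm_nonneg _) (fun _ hz ↦ infDist_spectrum_le_norm_sub hz)
    (fun _ hz ↦ norm_sub_rev a b ▸ infDist_spectrum_le_norm_sub hz)

/-- For bounded self-adjoint operators `A`, `B` on a complex Hilbert space, the Hausdorff
distance between their spectra is at most `‖A - B‖`. -/
theorem stmt_2 {H : Type*} [NormedAddCommGroup H] [InnerProductSpace ℂ H] [CompleteSpace H]
    (A B : H →L[ℂ] H) (hA : IsSelfAdjoint A) (hB : IsSelfAdjoint B) :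
    Metric.hausdorffDist (spectrum ℂ A) (spectrum ℂ B) ≤ ‖A - B‖ := by
  have := hA.isStarNormal
  have := hB.isStarNormal
  exact hausdorffDist_spectrum_le_norm_sub A B
end

section
/- Let Σ ⊆ ℝ be compact and suppose there are δ₀ > 0 and τ > 0 such that for every N, Σ is the Hausdorff limit of compact sets Σ_N satisfying |B_δ(x) ∩ Σ_N| ≥ τδ for all x ∈ Σ_N and all 0 < δ ≤ δ₀. Then |B_δ(x) ∩ Σ| ≥ τδ for all x ∈ Σ and all 0 < δ ≤ δ₀; i.e., homogeneity passes to Hausdorff limits when the constants are uniform. -/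
open Filter MeasureTheory

/-- Homogeneity passes to Hausdorff limits with uniform constants: if `Σ_N → Σ` in the
Hausdorff metric, each `Σ_N` satisfies `|B_δ(x) ∩ Σ_N| ≥ τ δ` for all `x ∈ Σ_N` and
`0 < δ ≤ δ₀`, then `|B_δ(x) ∩ Σ| ≥ τ δ` for all `x ∈ Σ` and `0 < δ ≤ δ₀`. -/
theorem stmt_17 (S : ℕ → Set ℝ) (Slim : Set ℝ)
    (hSc : ∀ N, IsCompact (S N)) (hSne : ∀ N, (S N).Nonempty)
    (hSlimc : IsCompact Slim) (hSlimne : Slim.Nonempty)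
    (hconv : Tendsto (fun N => Metric.hausdorffDist (S N) Slim) atTop (nhds 0))
    (δ₀ τ : ℝ) (hδ₀ : 0 < δ₀) (hτ : 0 < τ)
    (hhom : ∀ N, ∀ x ∈ S N, ∀ δ : ℝ, 0 < δ → δ ≤ δ₀ →
      ENNReal.ofReal (τ * δ) ≤ volume (Metric.ball x δ ∩ S N)) :
    ∀ x ∈ Slim, ∀ δ : ℝ, 0 < δ → δ ≤ δ₀ →
      ENNReal.ofReal (τ * δ) ≤ volume (Metric.ball x δ ∩ Slim) := by
  intro x hx δ hδ hδδ₀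
  set K := Metric.closedBall x δ ∩ Slim with hKdef
  have hKclosed : IsClosed K := Metric.isClosed_closedBall.inter hSlimc.isClosed
  -- reduce to the closed ball
  have hball : volume K ≤ volume (Metric.ball x δ ∩ Slim) := by
    have hsub : K ⊆ (Metric.ball x δ ∩ Slim) ∪ Metric.sphere x δ := by
      rintro y ⟨hy1, hy2⟩
      rw [← Metric.ball_union_sphere] at hy1
      rcases hy1 with h | h
      · exact Or.inl ⟨h, hy2⟩
      · exact Or.inr h
    calc volume K ≤ volume ((Metric.ball x δ ∩ Slim) ∪ Metric.sphere x δ) :=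
          measure_mono hsub
      _ ≤ volume (Metric.ball x δ ∩ Slim) + volume (Metric.sphere x δ) :=
          measure_union_le _ _
      _ = volume (Metric.ball x δ ∩ Slim) := by
          rw [Measure.addHaar_sphere volume, add_zero]
  refine le_trans ?_ hball
  -- the key estimate for each small r
  have key : ∀ r : ℝ, 0 < r → r < δ →
      ENNReal.ofReal (τ * (δ - r)) ≤ volume (Metric.cthickening r K) := by
    intro r hr hrδ
    -- choose N with small Hausdorff distance
    have hev : ∀ᶠ N in atTop, Metric.hausdorffDist (S N) Slim < r / 2 := by
      have := hconv.eventually (eventually_lt_nhds (by linarith : (0:ℝ) < r / 2))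
      exact this
    obtain ⟨N, hN⟩ := hev.exists
    have hedist : EMetric.hausdorffEdist (S N) Slim ≠ ⊤ :=
      Metric.hausdorffEdist_ne_top_of_nonempty_of_bounded (hSne N) hSlimne
        (hSc N).isBounded hSlimc.isBounded
    have hN' : Metric.hausdorffDist Slim (S N) < r / 2 := by
      rwa [Metric.hausdorffDist_comm]
    obtain ⟨y, hyS, hxy⟩ := Metric.exists_dist_lt_of_hausdorffDist_lt hx hN'
      (by rwa [EMetric.hausdorffEdist_comm])
    -- ball around y inside the thickening
    have hsub : Metric.ball y (δ - r) ∩ S N ⊆ Metric.cthickening r K := by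
      rintro z ⟨hz1, hz2⟩
      obtain ⟨w, hwS, hzw⟩ := Metric.exists_dist_lt_of_hausdorffDist_lt hz2 hN hedist
      have hwK : w ∈ K := by
        refine ⟨?_, hwS⟩
        rw [Metric.mem_closedBall]
        have h1 : dist z y < δ - r := Metric.mem_ball.1 hz1
        calc dist w x ≤ dist w z + dist z y + dist y x := dist_triangle4 w z y x
          _ ≤ r / 2 + (δ - r) + r / 2 := by
              rw [dist_comm w z, dist_comm y x]
              have := hzw.le
              have := h1.le
              have := hxy.le
              linarith
          _ = δ := by ring
      apply Metric.mem_cthickening_of_dist_le z w r K hwK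
      linarith [hzw.le]
    calc ENNReal.ofReal (τ * (δ - r))
        ≤ volume (Metric.ball y (δ - r) ∩ S N) :=
          hhom N y hyS (δ - r) (by linarith) (by linarith)
      _ ≤ volume (Metric.cthickening r K) := measure_mono hsub
  -- pass to the limit r → 0⁺
  have hfin : ∃ R > 0, volume (Metric.cthickening R K) ≠ ⊤ := by
    refine ⟨1, one_pos, ?_⟩
    have hb : Bornology.IsBounded (Metric.cthickening 1 K) :=
      ((Metric.isBounded_closedBall (x := x) (r := δ)).subset Set.inter_subset_left).cthickening
    exact hb.measure_lt_top.ne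
  have h1 : Tendsto (fun r => volume (Metric.cthickening r K)) (nhdsWithin 0 (Set.Ioi 0))
      (nhds (volume K)) :=
    (tendsto_measure_cthickening_of_isClosed hfin hKclosed).mono_left nhdsWithin_le_nhds
  have h2 : Tendsto (fun r : ℝ => ENNReal.ofReal (τ * (δ - r))) (nhdsWithin 0 (Set.Ioi 0))
      (nhds (ENNReal.ofReal (τ * δ))) := by
    have : Tendsto (fun r : ℝ => τ * (δ - r)) (nhdsWithin 0 (Set.Ioi 0)) (nhds (τ * δ)) := by
      have : Tendsto (fun r : ℝ => τ * (δ - r)) (nhds 0) (nhds (τ * (δ - 0))) := by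
        exact (tendsto_const_nhds.sub tendsto_id).const_mul τ
      simpa using this.mono_left nhdsWithin_le_nhds
    exact (ENNReal.continuous_ofReal.tendsto _).comp this
  refine le_of_tendsto_of_tendsto h2 h1 ?_
  filter_upwards [Ioo_mem_nhdsGT_of_mem (Set.left_mem_Ico.2 hδ)] with r hr
  exact key r hr.1 hr.2
end

section
/- Let Σ and Σ' be compact subsets of ℝ with d_H(Σ, Σ') ≤ ε, and suppose Σ' has at most q connected components. Then the Lebesgue measure of Σ \ Σ' is at most 2q·ε + 2ε, hence at most 8qε when q ≥ 1 (using the cruder bound). More precisely, |Σ \ Σ'| ≤ 2(q+1)ε. -/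
open MeasureTheory

/-- If `Σ, Σ'` are compact subsets of `ℝ` with `d_H(Σ, Σ') ≤ ε` and `Σ'` has at most `q`
connected components, then `|Σ \ Σ'| ≤ 2(q+1)ε`. -/
theorem stmt_18 (S S' : Set ℝ) (hSc : IsCompact S) (hS'c : IsCompact S')
    (hSne : S.Nonempty) (hS'ne : S'.Nonempty)
    (ε : ℝ) (hε : 0 ≤ ε) (hH : Metric.hausdorffDist S S' ≤ ε)
    (q : ℕ) (hq : 1 ≤ q)
    (hcomp : ∃ U : Fin q → Set ℝ, (∀ i, IsPreconnected (U i)) ∧ S' = ⋃ i, U i) :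
    volume (S \ S') ≤ ENNReal.ofReal (2 * (q + 1) * ε) := by
  classical
  obtain ⟨U, hUpc, hUS'⟩ := hcomp
  -- The "collar" sets
  set T : Fin q → Set ℝ := fun i =>
    if h : (U i).Nonempty then
      Set.Icc (sInf (U i) - ε) (sInf (U i)) ∪ Set.Icc (sSup (U i)) (sSup (U i) + ε)
    else ∅ with hT
  have hfin : EMetric.hausdorffEdist S S' ≠ ⊤ :=
    Metric.hausdorffEdist_ne_top_of_nonempty_of_bounded hSne hS'ne hSc.isBounded
      hS'c.isBounded
  have hUbdd : ∀ i, BddBelow (U i) ∧ BddAbove (U i) := by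
    intro i
    have hsub : U i ⊆ S' := hUS' ▸ Set.subset_iUnion U i
    exact ⟨hS'c.bddBelow.mono hsub, hS'c.bddAbove.mono hsub⟩
  have hsubset : S \ S' ⊆ ⋃ i, T i := by
    intro x ⟨hxS, hxS'⟩
    have hd : Metric.infDist x S' ≤ ε :=
      le_trans (Metric.infDist_le_hausdorffDist_of_mem hxS hfin) hH
    obtain ⟨y, hyS', hxy⟩ := hS'c.exists_infDist_eq_dist hS'ne x
    have hdist : |x - y| ≤ ε := by
      rw [← Real.dist_eq, ← hxy]; exact hd
    rw [hUS', Set.mem_iUnion] at hyS'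
    obtain ⟨i, hyi⟩ := hyS'
    have hne : (U i).Nonempty := ⟨y, hyi⟩
    have hbb := hUbdd i
    have hIoo : Set.Ioo (sInf (U i)) (sSup (U i)) ⊆ U i :=
      (IsConnected.Ioo_csInf_csSup_subset ⟨hne, hUpc i⟩ hbb.1 hbb.2)
    have hxnot : x ∉ Set.Ioo (sInf (U i)) (sSup (U i)) := by
      intro hx
      exact hxS' (hUS' ▸ Set.mem_iUnion.mpr ⟨i, hIoo hx⟩)
    have hya : sInf (U i) ≤ y := csInf_le hbb.1 hyi
    have hyb : y ≤ sSup (U i) := le_csSup hbb.2 hyi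
    have habs := abs_le.mp hdist
    refine Set.mem_iUnion.mpr ⟨i, ?_⟩
    rw [hT]
    simp only [hne, dif_pos]
    rw [Set.mem_Ioo, not_and_or, not_lt, not_lt] at hxnot
    rcases hxnot with h | h
    · exact Or.inl ⟨by linarith, h⟩
    · exact Or.inr ⟨h, by linarith⟩
  have hTvol : ∀ i, volume (T i) ≤ ENNReal.ofReal (2 * ε) := by
    intro i
    rw [hT]
    by_cases h : (U i).Nonempty
    · simp only [h, dif_pos]
      calc volume (Set.Icc (sInf (U i) - ε) (sInf (U i)) ∪
            Set.Icc (sSup (U i)) (sSup (U i) + ε))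
          ≤ volume (Set.Icc (sInf (U i) - ε) (sInf (U i))) +
            volume (Set.Icc (sSup (U i)) (sSup (U i) + ε)) := measure_union_le _ _
        _ = ENNReal.ofReal ε + ENNReal.ofReal ε := by
            rw [Real.volume_Icc, Real.volume_Icc]; ring_nf
        _ = ENNReal.ofReal (2 * ε) := by
            rw [← ENNReal.ofReal_add hε hε]; ring_nf
    · simp [h]
  calc volume (S \ S') ≤ volume (⋃ i, T i) := measure_mono hsubset
    _ ≤ ∑' i, volume (T i) := measure_iUnion_le T
    _ = ∑ i, volume (T i) := tsum_fintype _
    _ ≤ ∑ _i : Fin q, ENNReal.ofReal (2 * ε) := Finset.sum_le_sum fun i _ => hTvol i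
    _ = q * ENNReal.ofReal (2 * ε) := by simp [Finset.sum_const, nsmul_eq_mul]
    _ = ENNReal.ofReal (q * (2 * ε)) := by
        rw [ENNReal.ofReal_mul (by positivity : (0:ℝ) ≤ (q:ℝ))]
        simp
    _ ≤ ENNReal.ofReal (2 * (q + 1) * ε) := by
        apply ENNReal.ofReal_le_ofReal
        nlinarith [(Nat.one_le_cast (α := ℝ)).mpr hq]
end
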